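/- Every interval [x,y] of length 2 in the Bruhat–Chevalley–Renner order on R_n is either a chain {x, x_1, y} with x < x_1 < y, or a 'diamond' {x, x_1, x_1', y} with exactly two distinct intermediate elements x_1 ≠ x_1'. -/

import Mathlib

open Finset

variable {n : ℕ}

/-- An element of the rook monoid `R_n` in one-line notation: a sequence of
entries in `{0,...,n}` whose nonzero entries are pairwise distinct. -/
def IsRook (n : ℕ) (a : Fin n → ℕ) : Prop :=
  (∀ i, a i ≤ n) ∧ ∀ i j, a i ≠ 0 → a i = a j → i = j

/-- number of inversions -/
def rinv (a : Fin n → ℕ) : ℕ :=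
  ((univ ×ˢ univ).filter fun p : Fin n × Fin n => p.1 < p.2 ∧ a p.2 < a p.1).card

/-- number of coinversion pairs -/
def rcoinv (a : Fin n → ℕ) : ℕ :=
  ((univ ×ˢ univ).filter fun p : Fin n × Fin n => p.1 < p.2 ∧ 0 < a p.1 ∧ a p.1 < a p.2).card

/-- the length function ℓ -/
def rlen (a : Fin n → ℕ) : ℕ := (∑ i, a i) + rinv a

/-- type 1 generating relation: increase a single entry -/
def Step1 (a b : Fin n → ℕ) : Prop := ∃ i, a i < b i ∧ ∀ j, j ≠ i → a j = b j

/-- type 2 generating relation: swap two entries, larger one first -/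
def Step2 (a b : Fin n → ℕ) : Prop :=
  ∃ i j, i < j ∧ a i < a j ∧ b i = a j ∧ b j = a i ∧ ∀ k, k ≠ i → k ≠ j → a k = b k

/-- the Bruhat-Chevalley-Renner order on `R_n` -/
def RookLe (n : ℕ) (a b : Fin n → ℕ) : Prop :=
  Relation.ReflTransGen (fun x y => IsRook n x ∧ IsRook n y ∧ (Step1 x y ∨ Step2 x y)) a b

def RookLt (n : ℕ) (a b : Fin n → ℕ) : Prop := RookLe n a b ∧ a ≠ b

/-- covering relation of the Bruhat-Chevalley-Renner order -/
def RookCov (n : ℕ) (a b : Fin n → ℕ) : Prop :=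
  RookLt n a b ∧ ∀ z, RookLt n a z → RookLt n z b → False

/-- the edge labeling `F` on covering relations -/
noncomputable def Flabel (a b : Fin n → ℕ) : ℕ × ℕ := by
  classical
  exact if h : ∃ i, a i < b i ∧ ∀ j, j ≠ i → a j = b j then (a h.choose, b h.choose)
  else if h2 : ∃ p : Fin n × Fin n, p.1 < p.2 ∧ a p.1 < a p.2 ∧ b p.1 = a p.2 ∧ b p.2 = a p.1 ∧
      ∀ k, k ≠ p.1 → k ≠ p.2 → a k = b k then (a h2.choose.1, a h2.choose.2)
  else (0, 0)

/-- lexicographic (strict) order on labels -/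
def pairLt (p q : ℕ × ℕ) : Prop := p.1 < q.1 ∨ (p.1 = q.1 ∧ p.2 < q.2)

def pairLe (p q : ℕ × ℕ) : Prop := p = q ∨ pairLt p q

/-- lexicographic comparison of label sequences -/
def lexLe (l m : List (ℕ × ℕ)) : Prop := l = m ∨ List.Lex pairLt l m

/-- the Jordan-Hölder sequence of labels of a chain -/
noncomputable def labels (c : List (Fin n → ℕ)) : List (ℕ × ℕ) :=
  List.zipWith Flabel c c.tail

/-- a maximal chain in the interval `[x,y]` -/
def RookMaxChain (n : ℕ) (x y : Fin n → ℕ) (c : List (Fin n → ℕ)) : Prop :=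
  c.Chain' (RookCov n) ∧ c.head? = some x ∧ c.getLast? = some y

/-!
An element `z` strictly inside `[x, y]` has length `ℓ x + 1`, so `x → z → y` consists of two
generating relations, each of them a cover. Exact formulas for the growth of `ℓ` under raising
`x i` to a fresh value `c` (`1`, plus `2` per later entry with value in `(x i, c)`, plus `1` per
later zero when `x i = 0`, plus `1` per value in `(x i, c)` that `x` does not take) and under
swapping `x i < x j` (`1`, plus `2` per entry between `i` and `j` with value between, plus `1` per
zero between when `x i = 0`) characterise the covers, and show that a relation of length two
factors through a cover, so the interval has a middle element.

For the upper bound, list the thirteen shapes of a two-relation path and sort them by the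
positions where `x` and `y` differ; there are one to four of them. In each case the pattern of
`y` leaves two candidates for the middle element. The only families of candidates (raising
`x i` part of the way, raising one of several zeros, swapping one of several zeros) have at most
one member that is a cover.
-/

open Function

section Length

variable {x : Fin n → ℕ} {i j : Fin n} {c : ℕ}

lemma rinv_eq_sum (a : Fin n → ℕ) :
    (rinv a : ℤ) = ∑ k, ∑ l, if k < l ∧ a l < a k then (1 : ℤ) else 0 := by
  rw [rinv, card_filter, sum_product]
  push_cast
  rfl

/-- Raising the entry at `i` only changes the inversions that involve position `i`. -/
lemma rinv_update_sub (a : Fin n → ℕ) (i : Fin n) (c : ℕ) (h : a i ≤ c) :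
    (rinv (update a i c) : ℤ) - rinv a =
      (∑ l, if i < l ∧ a i ≤ a l ∧ a l < c then (1 : ℤ) else 0) -
        ∑ k, if k < i ∧ a i < a k ∧ a k ≤ c then (1 : ℤ) else 0 := by
  set b := update a i c
  set D : Fin n → Fin n → ℤ := fun k l =>
    (if k < l ∧ b l < b k then 1 else 0) - if k < l ∧ a l < a k then 1 else 0
  have hoff : ∀ k l, k ≠ i → l ≠ i → D k l = 0 := by
    intro k l hk hl
    simp [D, b, hk, hl]
  have hrow : ∀ l, D i l = if i < l ∧ a i ≤ a l ∧ a l < c then 1 else 0 := by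
    intro l
    rcases eq_or_ne l i with rfl | hl
    · simp [D]
    · simp only [D, b, update_self, update_of_ne hl]
      split_ifs <;> omega
  have hcol : ∀ k, D k i = -if k < i ∧ a i < a k ∧ a k ≤ c then 1 else 0 := by
    intro k
    rcases eq_or_ne k i with rfl | hk
    · simp [D]
    · simp only [D, b, update_self, update_of_ne hk]
      split_ifs <;> omega
  have hsplit : ∑ k, ∑ l, D k l = ∑ l, D i l + ∑ k, D k i := by
    rw [← add_sum_erase _ _ (mem_univ i), ← add_sum_erase _ (fun k => D k i) (mem_univ i)]
    have hii : D i i = 0 := by simp [D]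
    rw [hii, zero_add]
    congr 1
    exact sum_congr rfl fun k hk =>
      sum_eq_single i (fun l _ hl => hoff k l (ne_of_mem_erase hk) hl) (by simp)
  calc (rinv b : ℤ) - rinv a = ∑ k, ∑ l, D k l := by
        simp only [rinv_eq_sum, D, ← sum_sub_distrib]
    _ = _ := by
        rw [hsplit, sum_congr rfl fun l _ => hrow l, sum_congr rfl fun k _ => hcol k,
          sum_neg_distrib, sub_eq_add_neg]

lemma card_taken_add_card_free (hx : IsRook n x) (a b : ℕ) :
    #{k | a < x k ∧ x k < b} + #{u ∈ Ioo a b | ∀ k, x k ≠ u} = b - a - 1 := by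
  have htaken : #{k | a < x k ∧ x k < b} = #{u ∈ Ioo a b | ∃ k, x k = u} := by
    rw [← card_image_of_injOn (f := x)]
    · congr 1
      ext u
      simp only [mem_image, mem_filter, mem_univ, true_and, mem_Ioo]
      constructor
      · rintro ⟨k, ⟨h1, h2⟩, rfl⟩
        exact ⟨⟨h1, h2⟩, k, rfl⟩
      · rintro ⟨⟨h1, h2⟩, k, rfl⟩
        exact ⟨k, ⟨h1, h2⟩, rfl⟩
    · intro k hk l _ hkl
      simp only [coe_filter, mem_univ, true_and, Set.mem_ofPred_eq] at hk
      exact hx.2 k l (by omega) hkl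
  rw [htaken, ← Nat.card_Ioo, ← card_filter_add_card_filter_not (s := Ioo a b)
    (fun u => ∃ k, x k = u)]
  simp only [not_exists]

lemma card_taken_split (x : Fin n → ℕ) (i : Fin n) (c : ℕ) :
    #{k | x i < x k ∧ x k < c} =
      #{k | k < i ∧ x i < x k ∧ x k < c} + #{l | i < l ∧ x i < x l ∧ x l < c} := by
  rw [← card_filter_add_card_filter_not (s := {k | x i < x k ∧ x k < c}) (· < i),
    filter_filter, filter_filter]
  congr 2 <;> ext k <;> simp only [mem_filter, mem_univ, true_and]
  · tauto
  · constructor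
    · rintro ⟨⟨h1, h2⟩, h3⟩
      refine ⟨lt_of_le_of_ne (not_lt.mp h3) ?_, h1, h2⟩
      rintro rfl
      omega
    · rintro ⟨h1, h2, h3⟩
      exact ⟨⟨h2, h3⟩, not_lt.mpr h1.le⟩

lemma card_le_split (x : Fin n → ℕ) (i : Fin n) (hc : x i < c) :
    #{l | i < l ∧ x i ≤ x l ∧ x l < c} =
      #{l | i < l ∧ x i < x l ∧ x l < c} + #{l | i < l ∧ x l = x i} := by
  rw [← card_filter_add_card_filter_not (s := {l | i < l ∧ x i ≤ x l ∧ x l < c})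
    (fun l => x l ≠ x i), filter_filter, filter_filter]
  congr 2 <;> ext l <;> simp only [mem_filter, mem_univ, true_and] <;> omega

theorem rlen_update (hx : IsRook n x) (hc : x i < c) (hfresh : ∀ k, k ≠ i → x k ≠ c) :
    rlen (update x i c) = rlen x + 1 + 2 * #{l | i < l ∧ x i < x l ∧ x l < c}
      + #{l | i < l ∧ x l = x i} + #{u ∈ Ioo (x i) c | ∀ k, x k ≠ u} := by
  have hinv := rinv_update_sub x i c hc.le
  simp only [sum_boole] at hinv
  have hlower : #{k | k < i ∧ x i < x k ∧ x k ≤ c} = #{k | k < i ∧ x i < x k ∧ x k < c} := by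
    congr 1
    ext k
    simp only [mem_filter, mem_univ, true_and]
    constructor
    · rintro ⟨h1, h2, h3⟩
      exact ⟨h1, h2, lt_of_le_of_ne h3 (hfresh k (by rintro rfl; omega))⟩
    · rintro ⟨h1, h2, h3⟩
      exact ⟨h1, h2, h3.le⟩
  have hsum : ∑ k, update x i c k + x i = ∑ k, x k + c := by
    rw [sum_update_of_mem (mem_univ i), ← add_sum_erase _ _ (mem_univ i),
      sdiff_singleton_eq_erase]
    ring
  -- each value strictly between `x i` and `c` is taken before `i`, taken after `i`, or free
  have hcount := card_taken_add_card_free hx (x i) c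
  rw [card_taken_split] at hcount
  rw [card_le_split x i hc, hlower] at hinv
  unfold rlen
  omega

theorem rlen_comp_swap (hx : IsRook n x) (hij : i < j) (hv : x i < x j) :
    rlen (x ∘ Equiv.swap i j) = rlen x + 1 + 2 * #{k | i < k ∧ k < j ∧ x i < x k ∧ x k < x j}
      + #{k | i < k ∧ k < j ∧ x k = x i} := by
  set z := x ∘ Equiv.swap i j
  have hji : j ≠ i := hij.ne'
  have hzi : z i = x j := by simp [z]
  have hzj : z j = x i := by simp [z]
  have hzo : ∀ k, k ≠ i → k ≠ j → z k = x k := fun k h1 h2 => by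
    simp [z, Equiv.swap_apply_of_ne_of_ne h1 h2]
  have hfresh : ∀ k, k ≠ j → x k ≠ x j := fun k hk h => hk (hx.2 k j (by omega) h)
  -- both `x` and `z` are one raise away from `update x i (x j)`
  have hm : update z j (x j) = update x i (x j) := by
    funext k
    rcases eq_or_ne k j with rfl | hkj
    · simp [update_of_ne hji]
    rcases eq_or_ne k i with rfl | hki
    · simp [hkj, hzi]
    · simp [hkj, hki, hzo k hki hkj]
  have h1 := rinv_update_sub x i (x j) hv.le
  have h2 := rinv_update_sub z j (x j) (by rw [hzj]; exact hv.le)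
  rw [hm, hzj] at h2
  set g : Fin n → ℤ := fun k => (if i < k ∧ x i ≤ x k ∧ x k < x j then 1 else 0)
    - (if k < i ∧ x i < x k ∧ x k ≤ x j then 1 else 0)
    - (if j < k ∧ x i ≤ z k ∧ z k < x j then 1 else 0)
    + (if k < j ∧ x i < z k ∧ z k ≤ x j then 1 else 0)
  have hinv : (rinv z : ℤ) - rinv x = ∑ k, g k := by
    simp only [g, sum_add_distrib, sum_sub_distrib]
    linarith
  have hpt : ∀ k, g k = (if k = i then 1 else 0)
      + 2 * (if i < k ∧ k < j ∧ x i < x k ∧ x k < x j then 1 else 0)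
      + (if i < k ∧ k < j ∧ x k = x i then 1 else 0) := by
    intro k
    simp only [g]
    rcases eq_or_ne k i with rfl | hki
    · rw [hzi]
      split_ifs <;> omega
    rcases eq_or_ne k j with rfl | hkj
    · rw [hzj]
      split_ifs <;> omega
    · rw [hzo k hki hkj]
      have := hfresh k hkj
      split_ifs <;> omega
  simp only [hpt, sum_add_distrib, ← mul_sum, sum_ite_eq', mem_univ, if_true, sum_boole] at hinv
  have hsum : ∑ k, z k = ∑ k, x k := Equiv.sum_comp (Equiv.swap i j) x
  unfold rlen
  omega

end Length

section Steps

variable {x y z : Fin n → ℕ} {i j : Fin n} {c : ℕ}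

lemma step1_iff : Step1 x z ↔ ∃ i c, x i < c ∧ z = update x i c := by
  constructor
  · rintro ⟨i, hi, hrest⟩
    refine ⟨i, z i, hi, funext fun k => ?_⟩
    rcases eq_or_ne k i with rfl | hk
    · simp
    · simp [hk, hrest k hk]
  · rintro ⟨i, c, hc, rfl⟩
    exact ⟨i, by simpa using hc, fun k hk => by simp [hk]⟩

lemma step2_iff : Step2 x z ↔ ∃ i j, i < j ∧ x i < x j ∧ z = x ∘ Equiv.swap i j := by
  constructor
  · rintro ⟨i, j, hij, hv, hzi, hzj, hrest⟩
    refine ⟨i, j, hij, hv, funext fun k => ?_⟩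
    rcases eq_or_ne k i with rfl | hki
    · simpa using hzi
    rcases eq_or_ne k j with rfl | hkj
    · simpa using hzj
    · simp [Equiv.swap_apply_of_ne_of_ne hki hkj, hrest k hki hkj]
  · rintro ⟨i, j, hij, hv, rfl⟩
    exact ⟨i, j, hij, hv, by simp, by simp,
      fun k hki hkj => by simp [Equiv.swap_apply_of_ne_of_ne hki hkj]⟩

lemma IsRook.eq_zero_of_eq (hx : IsRook n x) (hij : i ≠ j) (h : x i = x j) : x i = 0 := by
  by_contra h0
  exact hij (hx.2 i j h0 h)

lemma IsRook.update_of_forall_ne (hx : IsRook n x) (hc : c ≤ n)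
    (hfresh : ∀ k, k ≠ i → x k ≠ c) : IsRook n (update x i c) := by
  refine ⟨fun k => ?_, fun k l hk hkl => ?_⟩
  · rcases eq_or_ne k i with rfl | hki
    · simpa using hc
    · simpa [hki] using hx.1 k
  · by_contra hne
    rcases eq_or_ne k i with rfl | hki
    · simp only [update_self, update_of_ne (Ne.symm hne)] at hkl
      exact hfresh l (Ne.symm hne) hkl.symm
    rcases eq_or_ne l i with rfl | hli
    · simp only [update_of_ne hki, update_self] at hkl
      exact hfresh k hki hkl
    · simp only [update_of_ne hki, update_of_ne hli] at hk hkl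
      exact hne (hx.2 k l hk hkl)

lemma IsRook.forall_ne_of_update (hz : IsRook n (update x i c)) (hc : x i < c) :
    ∀ k, k ≠ i → x k ≠ c := by
  intro k hki hk
  exact hki (hz.2 k i (by rw [update_of_ne hki]; omega) (by simp [hki, hk]))

lemma IsRook.comp_swap (hx : IsRook n x) (i j : Fin n) : IsRook n (x ∘ Equiv.swap i j) :=
  ⟨fun _ => hx.1 _, fun _ _ hk hkl => (Equiv.swap i j).injective (hx.2 _ _ hk hkl)⟩

lemma rlen_lt_of_step (hx : IsRook n x) (hz : IsRook n z) (h : Step1 x z ∨ Step2 x z) :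
    rlen x < rlen z := by
  rcases h with h | h
  · obtain ⟨i, c, hc, rfl⟩ := step1_iff.mp h
    rw [rlen_update hx hc (hz.forall_ne_of_update hc)]
    omega
  · obtain ⟨i, j, hij, hv, rfl⟩ := step2_iff.mp h
    rw [rlen_comp_swap hx hij hv]
    omega

lemma RookLe.eq_or_rlen_lt (h : RookLe n x y) : x = y ∨ rlen x < rlen y := by
  induction h with
  | refl => exact Or.inl rfl
  | tail _ hstep ih =>
    have := rlen_lt_of_step hstep.1 hstep.2.1 hstep.2.2
    rcases ih with rfl | ih
    · exact Or.inr this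
    · exact Or.inr (ih.trans this)

lemma RookLt.rlen_lt (h : RookLt n x y) : rlen x < rlen y :=
  h.1.eq_or_rlen_lt.resolve_left h.2

lemma rookLt_of_step (hx : IsRook n x) (hz : IsRook n z) (h : Step1 x z ∨ Step2 x z) :
    RookLt n x z :=
  ⟨.single ⟨hx, hz, h⟩, fun he => by have := rlen_lt_of_step hx hz h; rw [he] at this; omega⟩

end Steps

section Covers

variable {x y z : Fin n → ℕ} {i j : Fin n} {c : ℕ}

def StepCov (n : ℕ) (x z : Fin n → ℕ) : Prop :=
  IsRook n x ∧ IsRook n z ∧ (Step1 x z ∨ Step2 x z) ∧ rlen z = rlen x + 1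

lemma StepCov.rookLt (h : StepCov n x z) : RookLt n x z :=
  rookLt_of_step h.1 h.2.1 h.2.2.1

lemma RookLt.stepCov (h : RookLt n x y) (hl : rlen y = rlen x + 1) : StepCov n x y := by
  obtain ⟨hle, hne⟩ := h
  rcases Relation.ReflTransGen.cases_head hle with rfl | ⟨m, hstep, hrest⟩
  · exact absurd rfl hne
  rcases RookLe.eq_or_rlen_lt hrest with rfl | hlt
  · exact ⟨hstep.1, hstep.2.1, hstep.2.2, hl⟩
  · have := rlen_lt_of_step hstep.1 hstep.2.1 hstep.2.2
    omega

lemma rookLt_rookLt_iff (hlen : rlen y = rlen x + 2) :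
    RookLt n x z ∧ RookLt n z y ↔ StepCov n x z ∧ StepCov n z y := by
  constructor
  · rintro ⟨hxz, hzy⟩
    have h1 := hxz.rlen_lt
    have h2 := hzy.rlen_lt
    exact ⟨hxz.stepCov (by omega), hzy.stepCov (by omega)⟩
  · rintro ⟨hxz, hzy⟩
    exact ⟨hxz.rookLt, hzy.rookLt⟩

lemma rlen_update_eq_succ (hx : IsRook n x) (hc : x i < c) (hfresh : ∀ k, k ≠ i → x k ≠ c)
    (h : rlen (update x i c) = rlen x + 1) :
    (∀ l, i < l → x l < x i ∨ c < x l) ∧ ∀ u, x i < u → u < c → ∃ k, x k = u := by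
  rw [rlen_update hx hc hfresh] at h
  have hjump : #{l | i < l ∧ x i < x l ∧ x l < c} = 0 := by omega
  have hzero : #{l | i < l ∧ x l = x i} = 0 := by omega
  have hfree : #{u ∈ Ioo (x i) c | ∀ k, x k ≠ u} = 0 := by omega
  simp only [card_eq_zero, filter_eq_empty_iff, mem_univ, true_implies, mem_Ioo]
    at hjump hzero hfree
  refine ⟨fun l hl => ?_, fun u hu1 hu2 => by simpa using hfree ⟨hu1, hu2⟩⟩
  have := hfresh l hl.ne'
  have := @hjump l
  have := @hzero l
  omega

lemma rlen_comp_swap_eq_succ (hx : IsRook n x) (hij : i < j) (hv : x i < x j)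
    (h : rlen (x ∘ Equiv.swap i j) = rlen x + 1) :
    ∀ k, i < k → k < j → x k < x i ∨ x j < x k := by
  rw [rlen_comp_swap hx hij hv] at h
  have hjump : #{k | i < k ∧ k < j ∧ x i < x k ∧ x k < x j} = 0 := by omega
  have hzero : #{k | i < k ∧ k < j ∧ x k = x i} = 0 := by omega
  simp only [card_eq_zero, filter_eq_empty_iff, mem_univ, true_implies] at hjump hzero
  intro k hik hkj
  have : x k ≠ x j := fun he => hkj.ne (hx.2 k j (by omega) he)
  have := @hjump k
  have := @hzero k
  omega

/-- A raise of length two factors through a smaller raise (when it skips a free value) or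
through raising a later zero and swapping it forward. -/
lemma exists_between_of_update (hx : IsRook n x) (hy : IsRook n (update x i c)) (hc : x i < c)
    (h : rlen (update x i c) = rlen x + 2) :
    ∃ z, RookLt n x z ∧ RookLt n z (update x i c) := by
  have hfresh := hy.forall_ne_of_update hc
  have hcn : c ≤ n := by simpa using hy.1 i
  rw [rlen_update hx hc hfresh] at h
  rcases Nat.eq_zero_or_pos #{l | i < l ∧ x l = x i} with hzero | hzero
  · obtain ⟨u, hu⟩ := card_pos.mp (show 0 < #{u ∈ Ioo (x i) c | ∀ k, x k ≠ u} by omega)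
    simp only [mem_filter, mem_Ioo] at hu
    obtain ⟨⟨hu1, hu2⟩, hfree⟩ := hu
    have hz := hx.update_of_forall_ne (i := i) (by omega) fun k _ => hfree k
    refine ⟨update x i u, rookLt_of_step hx hz (.inl (step1_iff.mpr ⟨i, u, hu1, rfl⟩)),
      rookLt_of_step hz hy (.inl (step1_iff.mpr ⟨i, c, by simpa using hu2, by simp⟩))⟩
  · obtain ⟨l, hl⟩ := card_pos.mp hzero
    simp only [mem_filter, mem_univ, true_and] at hl
    obtain ⟨hil, hli⟩ := hl
    have hfresh' : ∀ k, k ≠ l → x k ≠ c := fun k hkl hk => by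
      rcases eq_or_ne k i with rfl | hki
      · omega
      · exact hfresh k hki hk
    have hz := hx.update_of_forall_ne hcn hfresh'
    have hswap : update x i c = update x l c ∘ Equiv.swap i l := by
      funext k
      simp only [comp_apply, Equiv.swap_apply_def, update_apply]
      split_ifs <;> subst_vars <;> omega
    refine ⟨update x l c, rookLt_of_step hx hz (.inl (step1_iff.mpr ⟨l, c, by omega, rfl⟩)), ?_⟩
    refine rookLt_of_step hz hy (.inr (step2_iff.mpr ⟨i, l, hil, ?_, hswap⟩))
    simp only [update_apply]
    split_ifs <;> omega

/-- A swap of length two passes over a zero `x k = x i`, and factors through it. -/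
lemma exists_between_of_swap (hx : IsRook n x) (hij : i < j) (hv : x i < x j)
    (h : rlen (x ∘ Equiv.swap i j) = rlen x + 2) :
    ∃ z, RookLt n x z ∧ RookLt n z (x ∘ Equiv.swap i j) := by
  rw [rlen_comp_swap hx hij hv] at h
  obtain ⟨k, hk⟩ := card_pos.mp (show 0 < #{k | i < k ∧ k < j ∧ x k = x i} by omega)
  simp only [mem_filter, mem_univ, true_and] at hk
  obtain ⟨hik, hkj, hki⟩ := hk
  have hz := hx.comp_swap k j
  have hswap : x ∘ Equiv.swap i j = (x ∘ Equiv.swap k j) ∘ Equiv.swap i k := by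
    funext l
    simp only [comp_apply, Equiv.swap_apply_def]
    split_ifs <;> subst_vars <;> omega
  refine ⟨x ∘ Equiv.swap k j,
    rookLt_of_step hx hz (.inr (step2_iff.mpr ⟨k, j, hkj, by omega, rfl⟩)), ?_⟩
  refine rookLt_of_step hz (hx.comp_swap i j) (.inr (step2_iff.mpr ⟨i, k, hik, ?_, hswap⟩))
  simp only [comp_apply, Equiv.swap_apply_def]
  split_ifs <;> omega

lemma exists_rookLt_between (hx : IsRook n x) (hlt : RookLt n x y) (hlen : rlen y = rlen x + 2) :
    ∃ z, RookLt n x z ∧ RookLt n z y := by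
  obtain ⟨hle, hne⟩ := hlt
  rcases Relation.ReflTransGen.cases_head hle with rfl | ⟨m, hstep, hrest⟩
  · exact absurd rfl hne
  rcases RookLe.eq_or_rlen_lt hrest with rfl | hmy
  · rcases hstep.2.2 with h | h
    · obtain ⟨i, c, hc, rfl⟩ := step1_iff.mp h
      exact exists_between_of_update hx hstep.2.1 hc hlen
    · obtain ⟨i, j, hij, hv, rfl⟩ := step2_iff.mp h
      exact exists_between_of_swap hx hij hv hlen
  · exact ⟨m, rookLt_of_step hstep.1 hstep.2.1 hstep.2.2, hrest, fun he => by rw [he] at hmy; omega⟩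

end Covers

/-- The thirteen shapes of a path `x → z → y` of two generating relations: `z` is given
explicitly, `y` by its entries at the positions involved, and `hsupp` says that `y` agrees with
`x` elsewhere. -/
inductive TwoStep (x y z : Fin n → ℕ) : Prop
  | raise_raise (i : Fin n) (c : ℕ) (hc : x i < c) (hcy : c < y i) (hz : z = update x i c)
      (hsupp : ∀ k, y k ≠ x k → k = i)
  | raise_raise_ne (i i' : Fin n) (hii' : i ≠ i') (hi : x i < y i) (hi' : x i' < y i')
      (hz : z = update x i (y i)) (hsupp : ∀ k, y k ≠ x k → k = i ∨ k = i')
  | raise_swap (i p q : Fin n) (hpq : p < q) (hip : i ≠ p) (hiq : i ≠ q) (hi : x i < y i)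
      (hv : x p < x q) (hz : z = update x i (y i)) (hyp : y p = x q) (hyq : y q = x p)
      (hsupp : ∀ k, y k ≠ x k → k = i ∨ k = p ∨ k = q)
  | raise_fst_swap (p q : Fin n) (hpq : p < q) (hp : x p < y q) (hq : y q < x q)
      (hz : z = update x p (y q)) (hyp : y p = x q) (hsupp : ∀ k, y k ≠ x k → k = p ∨ k = q)
  | raise_snd_swap (p q : Fin n) (hpq : p < q) (hp : x p < y p) (hq : x q < y p)
      (hz : z = update x q (y p)) (hyq : y q = x p) (hsupp : ∀ k, y k ≠ x k → k = p ∨ k = q)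
  | swap_raise_fst (p q : Fin n) (hpq : p < q) (hv : x p < x q) (hp : x q < y p)
      (hz : z = x ∘ Equiv.swap p q) (hyq : y q = x p) (hsupp : ∀ k, y k ≠ x k → k = p ∨ k = q)
  | swap_raise_snd (p q : Fin n) (hpq : p < q) (hv : x p < x q) (hq : x p < y q)
      (hz : z = x ∘ Equiv.swap p q) (hyp : y p = x q) (hsupp : ∀ k, y k ≠ x k → k = p ∨ k = q)
  | swap_raise (p q i : Fin n) (hpq : p < q) (hip : i ≠ p) (hiq : i ≠ q) (hv : x p < x q)
      (hi : x i < y i) (hz : z = x ∘ Equiv.swap p q) (hyp : y p = x q) (hyq : y q = x p)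
      (hsupp : ∀ k, y k ≠ x k → k = p ∨ k = q ∨ k = i)
  | swap_swap (p q r s : Fin n) (hpq : p < q) (hrs : r < s) (hrp : r ≠ p) (hrq : r ≠ q)
      (hsp : s ≠ p) (hsq : s ≠ q) (hv : x p < x q) (hv' : x r < x s)
      (hz : z = x ∘ Equiv.swap p q) (hyp : y p = x q) (hyq : y q = x p) (hyr : y r = x s)
      (hys : y s = x r) (hsupp : ∀ k, y k ≠ x k → k = p ∨ k = q ∨ k = r ∨ k = s)
  | swap_swap_pq_qs (p q s : Fin n) (hpq : p < q) (hqs : q < s) (hv : x p < x q)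
      (hv' : x p < x s) (hz : z = x ∘ Equiv.swap p q) (hyp : y p = x q) (hyq : y q = x s)
      (hys : y s = x p) (hsupp : ∀ k, y k ≠ x k → k = p ∨ k = q ∨ k = s)
  | swap_swap_pq_ps (p q s : Fin n) (hpq : p < q) (hps : p < s) (hsq : s ≠ q) (hv : x p < x q)
      (hv' : x q < x s) (hz : z = x ∘ Equiv.swap p q) (hyp : y p = x s) (hyq : y q = x p)
      (hys : y s = x q) (hsupp : ∀ k, y k ≠ x k → k = p ∨ k = q ∨ k = s)
  | swap_swap_pq_rq (p q r : Fin n) (hpq : p < q) (hrq : r < q) (hrp : r ≠ p) (hv : x p < x q)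
      (hv' : x r < x p) (hz : z = x ∘ Equiv.swap p q) (hyp : y p = x q) (hyr : y r = x p)
      (hyq : y q = x r) (hsupp : ∀ k, y k ≠ x k → k = p ∨ k = q ∨ k = r)
  | swap_swap_pq_rp (p q r : Fin n) (hrp : r < p) (hpq : p < q) (hv : x p < x q)
      (hv' : x r < x q) (hz : z = x ∘ Equiv.swap p q) (hyr : y r = x q) (hyp : y p = x r)
      (hyq : y q = x p) (hsupp : ∀ k, y k ≠ x k → k = p ∨ k = q ∨ k = r)

section TwoStep

variable {x y z : Fin n → ℕ}

lemma twoStep_raise_raise {i i' : Fin n} {c c' : ℕ} (hc : x i < c) (hc' : update x i c i' < c') :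
    TwoStep x (update (update x i c) i' c') (update x i c) := by
  rcases eq_or_ne i' i with rfl | hii'
  · refine .raise_raise i' c hc (by simpa using hc') rfl fun k hk => ?_
    by_contra hki
    simp [hki] at hk
  · simp only [update_of_ne hii'] at hc'
    refine .raise_raise_ne i i' hii'.symm (by rw [update_of_ne hii'.symm, update_self]; omega)
      (by simpa using hc')
      (by simp [hii'.symm]) fun k hk => ?_
    by_contra hki
    simp only [not_or] at hki
    simp [hki.1, hki.2] at hk

lemma twoStep_raise_swap {i p q : Fin n} {c : ℕ} (hc : x i < c) (hpq : p < q)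
    (hv : update x i c p < update x i c q) :
    TwoStep x (update x i c ∘ Equiv.swap p q) (update x i c) := by
  have hsupp : ∀ k, (update x i c ∘ Equiv.swap p q) k ≠ x k → k = i ∨ k = p ∨ k = q := by
    intro k hk
    by_contra hk'
    simp only [not_or] at hk'
    simp [Equiv.swap_apply_def, hk'] at hk
  rcases eq_or_ne i p with rfl | hip
  · rw [update_self] at hv
    refine .raise_fst_swap i q hpq (by simpa [hpq.ne'] using hc) (by simpa [hpq.ne'] using hv)
      (by simp) (by simp [hpq.ne']) fun k hk => ?_
    rcases hsupp k hk with h | h | h <;> simp [h]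
  rcases eq_or_ne i q with rfl | hiq
  · rw [update_of_ne hpq.ne, update_self] at hv
    refine .raise_snd_swap p i hpq (by simpa using hv) (by simpa using hc) (by simp)
      (by simp [hpq.ne]) fun k hk => ?_
    rcases hsupp k hk with h | h | h <;> simp [h]
  · rw [update_of_ne hip.symm, update_of_ne hiq.symm] at hv
    have hyi : (update x i c ∘ Equiv.swap p q) i = c := by
      simp only [comp_apply, Equiv.swap_apply_of_ne_of_ne hip hiq, update_self]
    exact .raise_swap i p q hpq hip hiq (by omega) hv (by rw [hyi]) (by simp [hiq.symm])
      (by simp [hip.symm]) hsupp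

lemma twoStep_swap_raise {p q i : Fin n} {c : ℕ} (hpq : p < q) (hv : x p < x q)
    (hc : (x ∘ Equiv.swap p q) i < c) :
    TwoStep x (update (x ∘ Equiv.swap p q) i c) (x ∘ Equiv.swap p q) := by
  have hsupp : ∀ k, update (x ∘ Equiv.swap p q) i c k ≠ x k → k = p ∨ k = q ∨ k = i := by
    intro k hk
    by_contra hk'
    simp only [not_or] at hk'
    simp [Equiv.swap_apply_def, hk'] at hk
  rcases eq_or_ne i p with rfl | hip
  · refine .swap_raise_fst i q hpq hv (by simpa using hc) rfl (by simp [hpq.ne']) fun k hk => ?_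
    rcases hsupp k hk with h | h | h <;> simp [h]
  rcases eq_or_ne i q with rfl | hiq
  · refine .swap_raise_snd p i hpq hv (by simpa using hc) rfl (by simp [hpq.ne]) fun k hk => ?_
    rcases hsupp k hk with h | h | h <;> simp [h]
  · simp only [comp_apply, Equiv.swap_apply_of_ne_of_ne hip hiq] at hc
    exact .swap_raise p q i hpq hip hiq hv (by simpa using hc) rfl (by simp [hip.symm])
      (by simp [hiq.symm]) hsupp

lemma twoStep_swap_swap {p q r s : Fin n} (hpq : p < q) (hv : x p < x q) (hrs : r < s)
    (hv' : (x ∘ Equiv.swap p q) r < (x ∘ Equiv.swap p q) s) :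
    TwoStep x (x ∘ Equiv.swap p q ∘ Equiv.swap r s) (x ∘ Equiv.swap p q) := by
  have hsupp : ∀ k, (x ∘ Equiv.swap p q ∘ Equiv.swap r s) k ≠ x k →
      k = p ∨ k = q ∨ k = r ∨ k = s := by
    intro k hk
    by_contra hk'
    simp only [not_or] at hk'
    simp [Equiv.swap_apply_def, hk'] at hk
  rcases eq_or_ne r p with rfl | hrp
  · rcases eq_or_ne s q with rfl | hsq
    · simp only [comp_apply, Equiv.swap_apply_left, Equiv.swap_apply_right] at hv'
      omega
    refine .swap_swap_pq_ps r q s hpq hrs hsq hv ?_ rfl ?_ ?_ ?_ fun k hk => ?_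
    rotate_left 4
    · rcases hsupp k hk with h | h | h | h <;> simp [h]
    all_goals simp only [comp_apply, Equiv.swap_apply_def] at hv' ⊢
    all_goals split_ifs at hv' ⊢ <;> subst_vars <;> first | rfl | omega
  rcases eq_or_ne r q with rfl | hrq
  · refine .swap_swap_pq_qs p r s hpq hrs hv ?_ rfl ?_ ?_ ?_ fun k hk => ?_
    rotate_left 4
    · rcases hsupp k hk with h | h | h | h <;> simp [h]
    all_goals simp only [comp_apply, Equiv.swap_apply_def] at hv' ⊢
    all_goals split_ifs at hv' ⊢ <;> subst_vars <;> first | rfl | omega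
  rcases eq_or_ne s p with rfl | hsp
  · refine .swap_swap_pq_rp s q r hrs hpq hv ?_ rfl ?_ ?_ ?_ fun k hk => ?_
    rotate_left 4
    · rcases hsupp k hk with h | h | h | h <;> simp [h]
    all_goals simp only [comp_apply, Equiv.swap_apply_def] at hv' ⊢
    all_goals split_ifs at hv' ⊢ <;> subst_vars <;> first | rfl | omega
  rcases eq_or_ne s q with rfl | hsq
  · refine .swap_swap_pq_rq p s r hpq hrs hrp hv ?_ rfl ?_ ?_ ?_ fun k hk => ?_
    rotate_left 4
    · rcases hsupp k hk with h | h | h | h <;> simp [h]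
    all_goals simp only [comp_apply, Equiv.swap_apply_def] at hv' ⊢
    all_goals split_ifs at hv' ⊢ <;> subst_vars <;> first | rfl | omega
  · refine .swap_swap p q r s hpq hrs hrp hrq hsp hsq hv ?_ rfl ?_ ?_ ?_ ?_ hsupp
    all_goals simp only [comp_apply, Equiv.swap_apply_def] at hv' ⊢
    all_goals split_ifs at hv' ⊢ <;> subst_vars <;> first | rfl | omega

end TwoStep

section Middles

variable {x y z : Fin n → ℕ}

theorem twoStep_of_steps (h₁ : Step1 x z ∨ Step2 x z) (h₂ : Step1 z y ∨ Step2 z y) :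
    TwoStep x y z := by
  rcases h₁ with h₁ | h₁
  · obtain ⟨i, c, hc, rfl⟩ := step1_iff.mp h₁
    rcases h₂ with h₂ | h₂
    · obtain ⟨i', c', hc', rfl⟩ := step1_iff.mp h₂
      exact twoStep_raise_raise hc hc'
    · obtain ⟨p, q, hpq, hv, rfl⟩ := step2_iff.mp h₂
      exact twoStep_raise_swap hc hpq hv
  · obtain ⟨p, q, hpq, hv, rfl⟩ := step2_iff.mp h₁
    rcases h₂ with h₂ | h₂
    · obtain ⟨i, c, hc, rfl⟩ := step1_iff.mp h₂
      exact twoStep_swap_raise hpq hv hc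
    · obtain ⟨r, s, hrs, hv', rfl⟩ := step2_iff.mp h₂
      exact twoStep_swap_swap hpq hv hrs hv'

def middles (n : ℕ) (x y : Fin n → ℕ) : Set (Fin n → ℕ) := {z | StepCov n x z ∧ StepCov n z y}

lemma TwoStep.of_mem_middles (h : z ∈ middles n x y) : TwoStep x y z :=
  twoStep_of_steps h.1.2.2.1 h.2.2.2.1

lemma exists_pair_of_step (h : Step1 x z ∨ Step2 x z) :
    ∃ a b, ∀ k, z k ≠ x k → k = a ∨ k = b := by
  rcases h with ⟨i, -, hrest⟩ | ⟨i, j, -, -, -, -, hrest⟩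
  · exact ⟨i, i, fun k hk => .inl (by_contra fun hki => hk (hrest k hki).symm)⟩
  · refine ⟨i, j, fun k hk => by_contra fun hkij => hk (hrest k ?_ ?_).symm⟩ <;> tauto

lemma card_support_le_four (hz : z ∈ middles n x y) : #{k | y k ≠ x k} ≤ 4 := by
  obtain ⟨a, b, hab⟩ := exists_pair_of_step hz.1.2.2.1
  obtain ⟨c, d, hcd⟩ := exists_pair_of_step hz.2.2.2.1
  calc #{k | y k ≠ x k} ≤ #{a, b, c, d} := card_le_card fun k hk => by
        have hk : y k ≠ x k := by simpa using hk
        by_cases hzk : z k = x k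
        · rcases hcd k (hzk ▸ hk) with rfl | rfl <;> simp
        · rcases hab k hzk with rfl | rfl <;> simp
    _ ≤ 4 := card_le_four

end Middles

lemma Set.exists_subset_pair_of_subsingleton_inter {α : Type*} [Nonempty α] {S A B : Set α}
    (h : S ⊆ A ∪ B) (hA : (S ∩ A).Subsingleton) (hB : (S ∩ B).Subsingleton) :
    ∃ a b, S ⊆ {a, b} := by
  have hsingle : ∀ T : Set α, T.Subsingleton → ∃ a, T ⊆ {a} := fun T hT => by
    rcases hT.eq_empty_or_singleton with hT | ⟨a, hT⟩
    · exact ⟨Classical.arbitrary α, by simp [hT]⟩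
    · exact ⟨a, hT.le⟩
  obtain ⟨a, ha⟩ := hsingle _ hA
  obtain ⟨b, hb⟩ := hsingle _ hB
  refine ⟨a, b, fun z hz => ?_⟩
  rcases h hz with hzA | hzB
  · exact .inl (ha ⟨hz, hzA⟩)
  · exact .inr (hb ⟨hz, hzB⟩)

section Counting

variable {x y : Fin n → ℕ} {i : Fin n}

/-- Of two raises of the same entry, the larger one skips the value of the smaller one. -/
lemma eq_of_stepCov_update {c₁ c₂ : ℕ} (hx : IsRook n x) (h₁ : StepCov n x (update x i c₁))
    (h₂ : StepCov n x (update x i c₂)) (hc₁ : x i < c₁) (hc₂ : x i < c₂) : c₁ = c₂ := by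
  wlog hlt : c₁ < c₂ generalizing c₁ c₂
  · rcases lt_or_eq_of_le (not_lt.mp hlt) with hlt | heq
    · exact (this h₂ h₁ hc₂ hc₁ hlt).symm
    · exact heq.symm
  have hfresh₁ := h₁.2.1.forall_ne_of_update hc₁
  obtain ⟨k, hk⟩ := (rlen_update_eq_succ hx hc₂ (h₂.2.1.forall_ne_of_update hc₂) h₂.2.2.2).2
    c₁ hc₁ hlt
  exact absurd hk (hfresh₁ k (by rintro rfl; omega))

lemma not_stepCov_update_of_lt_of_eq {k l : Fin n} {c : ℕ} (hx : IsRook n x)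
    (h : StepCov n x (update x k c)) (hc : x k < c) (hkl : k < l) (hl : x l = x k) : False := by
  have := (rlen_update_eq_succ hx hc (h.2.1.forall_ne_of_update hc) h.2.2.2).1 l hkl
  omega

lemma not_stepCov_comp_swap_of_lt_of_eq {m m' q : Fin n} (hx : IsRook n x)
    (h : StepCov n x (x ∘ Equiv.swap m q)) (hmq : m < q) (hv : x m < x q) (hmm' : m < m')
    (hm'q : m' < q) (heq : x m' = x m) : False := by
  have := rlen_comp_swap_eq_succ hx hmq hv h.2.2.2 m' hmm' hm'q
  omega

lemma mem_middles_of_support_one {w : Fin n → ℕ} (hy : IsRook n y)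
    (hD : ∀ k, y k ≠ x k ↔ k = i) (hw : w ∈ middles n x y) :
    (∃ c, x i < c ∧ w = update x i c) ∨
      ∃ k, i < k ∧ x k = x i ∧ x i < y i ∧ w = update x k (y i) := by
  cases TwoStep.of_mem_middles hw with
  | raise_raise i₀ c hc hcy hz _ =>
    obtain rfl := (hD i₀).mp (by omega)
    exact .inl ⟨c, hc, hz⟩
  | raise_raise_ne i₀ i₁ hne hi₀ hi₁ _ _ =>
    have := (hD i₀).mp (by omega)
    have := (hD i₁).mp (by omega)
    omega
  | raise_swap i₀ p q hpq _ _ hi₀ hv _ hyp _ _ =>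
    have := (hD p).mp (by omega)
    have := (hD q).mp (by omega)
    omega
  | raise_fst_swap p q hpq hp hq _ hyp _ =>
    have := (hD p).mp (by omega)
    have := (hD q).mp (by omega)
    omega
  | raise_snd_swap p q hpq hp hq hz hyq _ =>
    obtain rfl := (hD p).mp (by omega)
    by_cases hxq : x q = x p
    · exact .inr ⟨q, hpq, hxq, hp, hz⟩
    · have := (hD q).mp (by omega)
      omega
  | swap_raise_fst p q hpq hv hp _ hyq _ =>
    have := (hD p).mp (by omega)
    have := (hD q).mp (by omega)
    omega
  | swap_raise_snd p q hpq hv hq _ hyp _ =>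
    have := (hD p).mp (by omega)
    by_cases hyq : y q = x q
    · exact absurd (hy.2 p q (by omega) (by omega)) hpq.ne
    · have := (hD q).mp hyq
      omega
  | swap_raise p q i₀ hpq _ _ hv _ _ hyp hyq _ =>
    have := (hD p).mp (by omega)
    have := (hD q).mp (by omega)
    omega
  | swap_swap p q r s hpq _ _ _ _ _ hv _ _ hyp hyq _ _ _ =>
    have := (hD p).mp (by omega)
    have := (hD q).mp (by omega)
    omega
  | swap_swap_pq_qs p q s hpq hqs hv hv' _ hyp _ hys _ =>
    have := (hD p).mp (by omega)
    have := (hD s).mp (by omega)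
    omega
  | swap_swap_pq_ps p q s hpq _ _ hv hv' _ hyp hyq _ _ =>
    have := (hD p).mp (by omega)
    have := (hD q).mp (by omega)
    omega
  | swap_swap_pq_rq p q r hpq _ _ hv hv' _ hyp _ hyq _ =>
    have := (hD p).mp (by omega)
    have := (hD q).mp (by omega)
    omega
  | swap_swap_pq_rp p q r hrp hpq hv hv' _ hyr _ hyq _ =>
    have := (hD r).mp (by omega)
    have := (hD q).mp (by omega)
    omega

theorem exists_middles_subset_pair_of_support_one (hx : IsRook n x) (hy : IsRook n y)
    (hD : ∀ k, y k ≠ x k ↔ k = i) : ∃ a b, middles n x y ⊆ {a, b} := by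
  refine Set.exists_subset_pair_of_subsingleton_inter
    (A := {w | ∃ c, x i < c ∧ w = update x i c})
    (B := {w | ∃ k, i < k ∧ x k = x i ∧ x i < y i ∧ w = update x k (y i)})
    (fun w hw => mem_middles_of_support_one hy hD hw) ?_ ?_
  · rintro w₁ ⟨hw₁, c₁, hc₁, rfl⟩ w₂ ⟨hw₂, c₂, hc₂, rfl⟩
    rw [eq_of_stepCov_update hx hw₁.1 hw₂.1 hc₁ hc₂]
  · rintro w₁ ⟨hw₁, k₁, hik₁, hk₁, hc, rfl⟩ w₂ ⟨hw₂, k₂, hik₂, hk₂, -, rfl⟩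
    rcases lt_trichotomy k₁ k₂ with hlt | rfl | hlt
    · exact (not_stepCov_update_of_lt_of_eq hx hw₁.1 (by omega) hlt (by omega)).elim
    · rfl
    · exact (not_stepCov_update_of_lt_of_eq hx hw₂.1 (by omega) hlt (by omega)).elim

lemma mem_middles_of_support_two {p q : Fin n} {w : Fin n → ℕ} (hx : IsRook n x)
    (hpq : p < q) (hD : ∀ k, y k ≠ x k ↔ k = p ∨ k = q) (hw : w ∈ middles n x y) :
    (w = x ∘ Equiv.swap p q ∧ x p < x q ∧ (y q = x p ∧ x q < y p ∨ y p = x q ∧ x p < y q)) ∨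
    (w = update x p (y p) ∧ x p < y p ∧ x q < y q ∧ y p ≠ x q) ∨
    (w = update x q (y q) ∧ x p < y p ∧ x q < y q ∧ y q ≠ x p) ∨
    (w = update x p (y q) ∧ y p = x q ∧ x p < y q ∧ y q < x q) ∨
    (w = update x q (y p) ∧ y q = x p ∧ x p < y p ∧ x q < y p) ∨
    (∃ m, p < m ∧ m < q ∧ x m = x p ∧ x p < x q ∧ w = x ∘ Equiv.swap m q ∧
      y p = x q ∧ y q = x p) := by
  have hp : y p ≠ x p := (hD p).mpr (.inl rfl)
  have hq : y q ≠ x q := (hD q).mpr (.inr rfl)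
  cases TwoStep.of_mem_middles hw with
  | raise_raise i c _ _ _ hsupp =>
    have := hsupp p hp
    have := hsupp q hq
    omega
  | raise_raise_ne i i' _ hi hi' hz hsupp =>
    subst hz
    have hfresh := hw.1.2.1.forall_ne_of_update hi
    rcases hsupp p hp with rfl | rfl <;> rcases hsupp q hq with rfl | rfl
    · omega
    · exact .inr (.inl ⟨rfl, hi, hi', hfresh q hpq.ne' |>.symm⟩)
    · exact .inr (.inr (.inl ⟨rfl, hi', hi, hfresh p hpq.ne |>.symm⟩))
    · omega
  | raise_swap i p' q' _ _ _ hi hv _ hyp hyq _ =>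
    have := (hD i).mp (by omega)
    have := (hD p').mp (by omega)
    have := (hD q').mp (by omega)
    omega
  | raise_fst_swap p' q' hpq' hp' hq' hz hyp' hsupp =>
    rcases hsupp p hp with rfl | rfl <;> rcases hsupp q hq with rfl | rfl <;> try omega
    exact .inr (.inr (.inr (.inl ⟨hz, hyp', hp', hq'⟩)))
  | raise_snd_swap p' q' hpq' hp' hq' hz hyq' hsupp =>
    rcases hsupp p hp with rfl | rfl <;> rcases hsupp q hq with rfl | rfl <;> try omega
    exact .inr (.inr (.inr (.inr (.inl ⟨hz, hyq', hp', hq'⟩))))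
  | swap_raise_fst p' q' hpq' hv hp' hz hyq' hsupp =>
    rcases hsupp p hp with rfl | rfl <;> rcases hsupp q hq with rfl | rfl <;> try omega
    exact .inl ⟨hz, hv, .inl ⟨hyq', hp'⟩⟩
  | swap_raise_snd p' q' hpq' hv hq' hz hyp' hsupp =>
    rcases hsupp p hp with rfl | rfl <;> rcases hsupp q hq with rfl | rfl <;> try omega
    exact .inl ⟨hz, hv, .inr ⟨hyp', hq'⟩⟩
  | swap_raise p' q' i _ _ _ hv hi _ hyp hyq _ =>
    have := (hD i).mp (by omega)
    have := (hD p').mp (by omega)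
    have := (hD q').mp (by omega)
    omega
  | swap_swap p' q' r s _ _ _ _ _ _ hv _ _ hyp hyq hyr hys _ =>
    have := (hD p').mp (by omega)
    have := (hD q').mp (by omega)
    have := (hD r).mp (by omega)
    omega
  | swap_swap_pq_qs p' q' s _ hqs hv hv' _ hyp hyq hys _ =>
    have := hx.eq_zero_of_eq hqs.ne
    have := (hD p').mp (by omega)
    have := (hD q').mp (by omega)
    have := (hD s).mp (by omega)
    omega
  | swap_swap_pq_ps p' q' s _ _ _ hv hv' _ hyp hyq hys _ =>
    have := (hD p').mp (by omega)
    have := (hD q').mp (by omega)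
    have := (hD s).mp (by omega)
    omega
  | swap_swap_pq_rq p' q' r _ _ _ hv hv' _ hyp hyr hyq _ =>
    have := (hD p').mp (by omega)
    have := (hD q').mp (by omega)
    have := (hD r).mp (by omega)
    omega
  | swap_swap_pq_rp p' q' r hrp hpq' hv hv' hz hyr hyp hyq hsupp =>
    by_cases hxr : x r = x p'
    · rcases hsupp p hp with rfl | rfl | rfl <;> rcases hsupp q hq with rfl | rfl | rfl <;>
        try omega
      exact .inr (.inr (.inr (.inr (.inr ⟨p', hrp, hpq', hxr.symm, by omega, hz, hyr, by omega⟩))))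
    · have := (hD r).mp (by omega)
      have := (hD p').mp (by omega)
      have := (hD q').mp (by omega)
      omega

theorem exists_middles_subset_pair_of_support_two {p q : Fin n} (hx : IsRook n x)
    (hpq : p < q) (hD : ∀ k, y k ≠ x k ↔ k = p ∨ k = q) : ∃ a b, middles n x y ⊆ {a, b} := by
  have hcases := fun {w} => mem_middles_of_support_two (w := w) hx hpq hD
  by_cases g1 : y p = x q <;> by_cases g2 : y q = x p
  · -- `y` swaps `x p < x q`: the middle element swaps a zero between `p` and `q` with `q`
    refine Set.exists_subset_pair_of_subsingleton_inter
      (A := {w | ∃ m, p < m ∧ m < q ∧ x m = x p ∧ x p < x q ∧ w = x ∘ Equiv.swap m q})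
      (B := ∅) (fun w hw => ?_) ?_ (by simp)
    · rcases hcases hw with ⟨-, h⟩ | ⟨-, h⟩ | ⟨-, h⟩ | ⟨-, h⟩ | ⟨-, h⟩ | ⟨m, h₁, h₂, h₃, h₄, hz, -⟩
      all_goals first | omega | exact .inl ⟨m, h₁, h₂, h₃, h₄, hz⟩
    · rintro w₁ ⟨hw₁, m₁, -, hmq₁, hx₁, hv, rfl⟩ w₂ ⟨hw₂, m₂, -, hmq₂, hx₂, -, rfl⟩
      rcases lt_trichotomy m₁ m₂ with hlt | rfl | hlt
      · exact (not_stepCov_comp_swap_of_lt_of_eq hx hw₁.1 hmq₁ (by omega) hlt hmq₂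
          (by omega)).elim
      · rfl
      · exact (not_stepCov_comp_swap_of_lt_of_eq hx hw₂.1 hmq₂ (by omega) hlt hmq₁
          (by omega)).elim
  · by_cases g3 : x q < y q
    · refine ⟨x ∘ Equiv.swap p q, update x q (y q), fun w hw => ?_⟩
      rcases hcases hw with ⟨hz, h⟩ | ⟨hz, h⟩ | ⟨hz, h⟩ | ⟨hz, h⟩ | ⟨hz, h⟩ | ⟨m, -, -, -, -, -, h⟩
      all_goals first | exact .inl hz | exact .inr hz | omega
    · refine ⟨x ∘ Equiv.swap p q, update x p (y q), fun w hw => ?_⟩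
      rcases hcases hw with ⟨hz, h⟩ | ⟨hz, h⟩ | ⟨hz, h⟩ | ⟨hz, h⟩ | ⟨hz, h⟩ | ⟨m, -, -, -, -, -, h⟩
      all_goals first | exact .inl hz | exact .inr hz | omega
  · by_cases g5 : x p < x q
    · refine ⟨x ∘ Equiv.swap p q, update x q (y p), fun w hw => ?_⟩
      rcases hcases hw with ⟨hz, h⟩ | ⟨hz, h⟩ | ⟨hz, h⟩ | ⟨hz, h⟩ | ⟨hz, h⟩ | ⟨m, -, -, -, -, -, h⟩
      all_goals first | exact .inl hz | exact .inr hz | omega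
    · refine ⟨update x p (y p), update x q (y p), fun w hw => ?_⟩
      rcases hcases hw with ⟨hz, h⟩ | ⟨hz, h⟩ | ⟨hz, h⟩ | ⟨hz, h⟩ | ⟨hz, h⟩ | ⟨m, -, -, -, -, -, h⟩
      all_goals first | exact .inl hz | exact .inr hz | omega
  · refine ⟨update x p (y p), update x q (y q), fun w hw => ?_⟩
    rcases hcases hw with ⟨hz, h⟩ | ⟨hz, h⟩ | ⟨hz, h⟩ | ⟨hz, h⟩ | ⟨hz, h⟩ | ⟨m, -, -, -, -, -, h⟩
    all_goals first | exact .inl hz | exact .inr hz | omega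

lemma mem_middles_of_support_three {d₁ d₂ d₃ : Fin n} {w : Fin n → ℕ}
    (h₁₂ : d₁ < d₂) (h₂₃ : d₂ < d₃) (hD : ∀ k, y k ≠ x k ↔ k = d₁ ∨ k = d₂ ∨ k = d₃)
    (hw : w ∈ middles n x y) :
    (w = update x d₁ (y d₁) ∧ x d₁ < y d₁ ∧ y d₂ = x d₃ ∧ y d₃ = x d₂ ∧ x d₂ < x d₃) ∨
    (w = update x d₂ (y d₂) ∧ x d₂ < y d₂ ∧ y d₁ = x d₃ ∧ y d₃ = x d₁ ∧ x d₁ < x d₃) ∨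
    (w = update x d₃ (y d₃) ∧ x d₃ < y d₃ ∧ y d₁ = x d₂ ∧ y d₂ = x d₁ ∧ x d₁ < x d₂) ∨
    (w = x ∘ Equiv.swap d₁ d₂ ∧ x d₁ < x d₂ ∧ (y d₁ = x d₂ ∧ y d₂ = x d₁ ∨
      y d₁ = x d₂ ∧ y d₂ = x d₃ ∧ y d₃ = x d₁ ∧ x d₁ < x d₃ ∨
      y d₁ = x d₃ ∧ y d₂ = x d₁ ∧ y d₃ = x d₂ ∧ x d₂ < x d₃)) ∨
    (w = x ∘ Equiv.swap d₁ d₃ ∧ x d₁ < x d₃ ∧ (y d₁ = x d₃ ∧ y d₃ = x d₁ ∨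
      y d₁ = x d₂ ∧ y d₂ = x d₃ ∧ y d₃ = x d₁ ∧ x d₃ < x d₂ ∨
      y d₁ = x d₃ ∧ y d₂ = x d₁ ∧ y d₃ = x d₂ ∧ x d₂ < x d₁)) ∨
    (w = x ∘ Equiv.swap d₂ d₃ ∧ x d₂ < x d₃ ∧ (y d₂ = x d₃ ∧ y d₃ = x d₂ ∨
      y d₁ = x d₂ ∧ y d₂ = x d₃ ∧ y d₃ = x d₁ ∧ x d₁ < x d₂ ∨
      y d₁ = x d₃ ∧ y d₂ = x d₁ ∧ y d₃ = x d₂ ∧ x d₁ < x d₃)) := by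
  have h₁ : y d₁ ≠ x d₁ := (hD d₁).mpr (.inl rfl)
  have h₂ : y d₂ ≠ x d₂ := (hD d₂).mpr (.inr (.inl rfl))
  have h₃ : y d₃ ≠ x d₃ := (hD d₃).mpr (.inr (.inr rfl))
  cases TwoStep.of_mem_middles hw with
  | swap_swap p q r s _ _ _ _ _ _ hv hv' _ hyp hyq hyr hys _ =>
    have := (hD p).mp (by omega)
    have := (hD q).mp (by omega)
    have := (hD r).mp (by omega)
    have := (hD s).mp (by omega)
    omega
  | _ =>
    -- every other shape touches at most three positions, which must be `d₁, d₂, d₃`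
    rename_i hsupp
    subst_vars
    rcases hsupp d₁ h₁ with rfl | rfl | rfl <;> rcases hsupp d₂ h₂ with rfl | rfl | rfl <;>
      rcases hsupp d₃ h₃ with rfl | rfl | rfl <;>
      first
      | omega
      | exact .inl ⟨rfl, by omega⟩
      | exact .inr (.inl ⟨rfl, by omega⟩)
      | exact .inr (.inr (.inl ⟨rfl, by omega⟩))
      | exact .inr (.inr (.inr (.inl ⟨rfl, by omega⟩)))
      | exact .inr (.inr (.inr (.inr (.inl ⟨rfl, by omega⟩))))
      | exact .inr (.inr (.inr (.inr (.inr ⟨rfl, by omega⟩))))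

theorem exists_middles_subset_pair_of_support_three {d₁ d₂ d₃ : Fin n} (hx : IsRook n x)
    (hy : IsRook n y) (h₁₂ : d₁ < d₂) (h₂₃ : d₂ < d₃)
    (hD : ∀ k, y k ≠ x k ↔ k = d₁ ∨ k = d₂ ∨ k = d₃) : ∃ a b, middles n x y ⊆ {a, b} := by
  have hcases := fun {w} => mem_middles_of_support_three (w := w) h₁₂ h₂₃ hD
  have := hD d₁
  have := hD d₂
  have := hD d₃
  have := hx.eq_zero_of_eq h₁₂.ne
  have := hx.eq_zero_of_eq h₂₃.ne
  have := hx.eq_zero_of_eq (h₁₂.trans h₂₃).ne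
  have := hy.eq_zero_of_eq h₁₂.ne
  have := hy.eq_zero_of_eq h₂₃.ne
  have := hy.eq_zero_of_eq (h₁₂.trans h₂₃).ne
  by_cases t₁₂ : y d₁ = x d₂ ∧ y d₂ = x d₁
  · refine ⟨update x d₃ (y d₃), x ∘ Equiv.swap d₁ d₂, fun w hw => ?_⟩
    rcases hcases hw with ⟨hz, h⟩ | ⟨hz, h⟩ | ⟨hz, h⟩ | ⟨hz, h⟩ | ⟨hz, h⟩ | ⟨hz, h⟩
    all_goals first | exact .inl hz | exact .inr hz | omega
  by_cases t₁₃ : y d₁ = x d₃ ∧ y d₃ = x d₁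
  · refine ⟨update x d₂ (y d₂), x ∘ Equiv.swap d₁ d₃, fun w hw => ?_⟩
    rcases hcases hw with ⟨hz, h⟩ | ⟨hz, h⟩ | ⟨hz, h⟩ | ⟨hz, h⟩ | ⟨hz, h⟩ | ⟨hz, h⟩
    all_goals first | exact .inl hz | exact .inr hz | omega
  by_cases t₂₃ : y d₂ = x d₃ ∧ y d₃ = x d₂
  · refine ⟨update x d₁ (y d₁), x ∘ Equiv.swap d₂ d₃, fun w hw => ?_⟩
    rcases hcases hw with ⟨hz, h⟩ | ⟨hz, h⟩ | ⟨hz, h⟩ | ⟨hz, h⟩ | ⟨hz, h⟩ | ⟨hz, h⟩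
    all_goals first | exact .inl hz | exact .inr hz | omega
  -- otherwise `y` permutes the three entries cyclically and every middle element is a swap
  by_cases hlt : y d₁ = x d₂ ∧ x d₂ < x d₃ ∨ y d₁ = x d₃ ∧ x d₁ < x d₂
  · refine ⟨x ∘ Equiv.swap d₁ d₂, x ∘ Equiv.swap d₂ d₃, fun w hw => ?_⟩
    rcases hcases hw with ⟨hz, h⟩ | ⟨hz, h⟩ | ⟨hz, h⟩ | ⟨hz, h⟩ | ⟨hz, h⟩ | ⟨hz, h⟩
    all_goals first | exact .inl hz | exact .inr hz | omega
  by_cases hcyc : y d₁ = x d₂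
  · refine ⟨x ∘ Equiv.swap d₁ d₂, x ∘ Equiv.swap d₁ d₃, fun w hw => ?_⟩
    rcases hcases hw with ⟨hz, h⟩ | ⟨hz, h⟩ | ⟨hz, h⟩ | ⟨hz, h⟩ | ⟨hz, h⟩ | ⟨hz, h⟩
    all_goals first | exact .inl hz | exact .inr hz | omega
  · refine ⟨x ∘ Equiv.swap d₁ d₃, x ∘ Equiv.swap d₂ d₃, fun w hw => ?_⟩
    rcases hcases hw with ⟨hz, h⟩ | ⟨hz, h⟩ | ⟨hz, h⟩ | ⟨hz, h⟩ | ⟨hz, h⟩ | ⟨hz, h⟩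
    all_goals first | exact .inl hz | exact .inr hz | omega

lemma mem_middles_of_support_four {d₁ d₂ d₃ d₄ : Fin n} {w : Fin n → ℕ}
    (h₁₂ : d₁ < d₂) (h₂₃ : d₂ < d₃) (h₃₄ : d₃ < d₄)
    (hD : ∀ k, y k ≠ x k ↔ k = d₁ ∨ k = d₂ ∨ k = d₃ ∨ k = d₄) (hw : w ∈ middles n x y) :
    ∃ p q r s, x p < x q ∧ x r < x s ∧ w = x ∘ Equiv.swap p q ∧ y p = x q ∧ y q = x p ∧ y r = x s ∧
      y s = x r ∧ ∀ k, y k ≠ x k → k = p ∨ k = q ∨ k = r ∨ k = s := by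
  have h₁ : y d₁ ≠ x d₁ := (hD d₁).mpr (.inl rfl)
  have h₂ : y d₂ ≠ x d₂ := (hD d₂).mpr (.inr (.inl rfl))
  have h₃ : y d₃ ≠ x d₃ := (hD d₃).mpr (.inr (.inr (.inl rfl)))
  have h₄ : y d₄ ≠ x d₄ := (hD d₄).mpr (.inr (.inr (.inr rfl)))
  cases TwoStep.of_mem_middles hw with
  | swap_swap p q r s _ _ _ _ _ _ hv hv' hz hyp hyq hyr hys hsupp =>
    exact ⟨p, q, r, s, hv, hv', hz, hyp, hyq, hyr, hys, hsupp⟩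
  | _ =>
    rename_i hsupp
    have := hsupp d₁ h₁
    have := hsupp d₂ h₂
    have := hsupp d₃ h₃
    have := hsupp d₄ h₄
    omega

theorem exists_middles_subset_pair_of_support_four {d₁ d₂ d₃ d₄ : Fin n} (hx : IsRook n x)
    (h₁₂ : d₁ < d₂) (h₂₃ : d₂ < d₃) (h₃₄ : d₃ < d₄)
    (hD : ∀ k, y k ≠ x k ↔ k = d₁ ∨ k = d₂ ∨ k = d₃ ∨ k = d₄) :
    ∃ a b, middles n x y ⊆ {a, b} := by
  rcases (middles n x y).eq_empty_or_nonempty with hempty | ⟨z, hz⟩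
  · exact ⟨x, x, by simp [hempty]⟩
  obtain ⟨p, q, r, s, hv, hv', -, hyp, hyq, hyr, hys, hsupp⟩ :=
    mem_middles_of_support_four h₁₂ h₂₃ h₃₄ hD hz
  refine ⟨x ∘ Equiv.swap p q, x ∘ Equiv.swap r s, fun w hw => ?_⟩
  obtain ⟨p', q', -, -, hvw, -, hw', hyp', -⟩ := mem_middles_of_support_four h₁₂ h₂₃ h₃₄ hD hw
  -- `y p'` is the entry of `x` that the swap at `p'` brings in, which pins down its partner
  rcases hsupp p' (by omega) with rfl | rfl | rfl | rfl
  · obtain rfl := hx.2 q' q (by omega) (by omega)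
    exact .inl hw'
  · omega
  · obtain rfl := hx.2 q' s (by omega) (by omega)
    exact .inr hw'
  · omega

lemma exists_orderEmbedding_support (x y : Fin n → ℕ) :
    ∃ f : Fin #{k | y k ≠ x k} ↪o Fin n, ∀ k, y k ≠ x k ↔ ∃ t, k = f t := by
  refine ⟨orderEmbOfFin _ rfl, fun k => ?_⟩
  have := congrArg (k ∈ ·) (range_orderEmbOfFin {k | y k ≠ x k} rfl)
  simp only [Set.mem_range, coe_filter, mem_univ, true_and, Set.mem_ofPred_eq] at this
  rw [← this]
  exact exists_congr fun _ => eq_comm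

theorem exists_middles_subset_pair (hx : IsRook n x) (hy : IsRook n y) :
    ∃ a b, middles n x y ⊆ {a, b} := by
  rcases (middles n x y).eq_empty_or_nonempty with hempty | ⟨z, hz⟩
  · exact ⟨x, x, by simp [hempty]⟩
  have hle := card_support_le_four hz
  have hpos : 0 < #{k | y k ≠ x k} := by
    refine Nat.pos_of_ne_zero fun h0 => ?_
    simp only [card_eq_zero, filter_eq_empty_iff, mem_univ, true_implies, not_not] at h0
    have h₁ := hz.1.2.2.2
    have h₂ := hz.2.2.2.2
    rw [funext h0] at h₂
    omega
  obtain ⟨f, hf⟩ := exists_orderEmbedding_support x y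
  generalize #{k | y k ≠ x k} = m at f hf hle hpos
  interval_cases m
  all_goals simp only [Fin.exists_fin_succ, Fin.exists_fin_zero, or_false] at hf
  · exact exists_middles_subset_pair_of_support_one hx hy hf
  · exact exists_middles_subset_pair_of_support_two (p := f 0) (q := f 1) hx
      (f.strictMono (by decide)) hf
  · exact exists_middles_subset_pair_of_support_three (d₁ := f 0) (d₂ := f 1) (d₃ := f 2) hx hy
      (f.strictMono (by decide)) (f.strictMono (by decide)) hf
  · exact exists_middles_subset_pair_of_support_four (d₁ := f 0) (d₂ := f 1) (d₃ := f 2)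
      (d₄ := f 3) hx (f.strictMono (by decide)) (f.strictMono (by decide))
      (f.strictMono (by decide)) hf

end Counting

theorem length_two_interval_chain_or_diamond (n : ℕ) (x y : Fin n → ℕ)
    (hx : IsRook n x) (hy : IsRook n y)
    (hlt : RookLt n x y) (hlen : rlen y = rlen x + 2) :
    (∃! z, RookLt n x z ∧ RookLt n z y) ∨
    (∃ z₁ z₂, z₁ ≠ z₂ ∧ RookLt n x z₁ ∧ RookLt n z₁ y ∧ RookLt n x z₂ ∧ RookLt n z₂ y ∧
      ∀ z, RookLt n x z → RookLt n z y → z = z₁ ∨ z = z₂) := by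
  obtain ⟨a, b, hab⟩ := exists_middles_subset_pair hx hy
  have hmem : ∀ z, RookLt n x z → RookLt n z y → z = a ∨ z = b := fun z hxz hzy =>
    hab ((rookLt_rookLt_iff hlen).mp ⟨hxz, hzy⟩)
  obtain ⟨z₁, hxz₁, hz₁y⟩ := exists_rookLt_between hx hlt hlen
  by_cases hunique : ∀ z, RookLt n x z → RookLt n z y → z = z₁
  · exact .inl ⟨z₁, ⟨hxz₁, hz₁y⟩, fun z hz => hunique z hz.1 hz.2⟩
  push Not at hunique
  obtain ⟨z₂, hxz₂, hz₂y, hne⟩ := hunique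
  refine .inr ⟨z₁, z₂, hne.symm, hxz₁, hz₁y, hxz₂, hz₂y, fun z hxz hzy => ?_⟩
  rcases hmem z₁ hxz₁ hz₁y with rfl | rfl <;> rcases hmem z₂ hxz₂ hz₂y with rfl | rfl <;>
    rcases hmem z hxz hzy with rfl | rfl <;> tauto
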